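/- Let V be a finite nonempty set, let π and p be probability distributions on V, let x* be a point attaining the maximum of p, and set q := 1 - p(x*). Then the off-mode mass of π satisfies 1 - π(x*) ≤ sup{ λ ∈ [0,1] : d_kl(λ ‖ q) ≤ D_KL(π ‖ p) }, and moreover q itself belongs to the set { λ ∈ [0,1] : d_kl(λ ‖ q) ≤ D_KL(π ‖ p) } since d_kl(q ‖ q) = 0. -/

import Mathlib

open Real

/-- Termwise KL contribution `p·log(p/q)` with the conventions
`0·log(0/q) = 0`, `0·log(0/0) = 0`, and `b·log(b/0) = +∞` for `b > 0`,
valued in the extended reals `[-∞, ∞]`. -/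
noncomputable def klTerm (p q : ℝ) : EReal :=
  if p = 0 then 0 else if q = 0 then ⊤ else ((p * Real.log (p / q) : ℝ) : EReal)

/-- Binary Kullback–Leibler divergence `d_kl(l ‖ q)` between the two-point
distributions `(l, 1 - l)` and `(q, 1 - q)`. -/
noncomputable def dkl (l q : ℝ) : EReal :=
  klTerm l q + klTerm (1 - l) (1 - q)

/-- Kullback–Leibler divergence `D_KL(μ ‖ p)` between distributions on a finite type. -/
noncomputable def DKL {V : Type*} [Fintype V] (μ p : V → ℝ) : EReal :=
  ∑ x, klTerm (μ x) (p x)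


/-!
Grouping `V` into the two blocks `{x*}` and `V \ {x*}` turns `π` and `p` into the two-point
distributions with masses `1 - π(x*)` and `q = 1 - p(x*)` on the second block, and by the log-sum
inequality grouping cannot increase the divergence: `d_kl(1 - π(x*) ‖ q) ≤ D_KL(π ‖ p)`. So the
off-mode mass lies in the set, which is bounded by `1`. Grouping all of `V` into one block gives
`D_KL(π ‖ p) ≥ 0 = d_kl(q ‖ q)`, so `q` lies in the set as well.
-/

lemma EReal.coe_finset_sum {ι : Type*} (s : Finset ι) (f : ι → ℝ) :
    ((∑ i ∈ s, f i : ℝ) : EReal) = ∑ i ∈ s, (f i : EReal) :=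
  map_sum (⟨⟨Real.toEReal, EReal.coe_zero⟩, EReal.coe_add⟩ : ℝ →+ EReal) f s

namespace Real

lemma sub_le_mul_log_div {a b : ℝ} (ha : 0 ≤ a) (hb : 0 ≤ b) (hab : a ≠ 0 → 0 < b) :
    a - b ≤ a * log (a / b) := by
  rcases ha.eq_or_lt with rfl | ha
  · simpa using hb
  have hlog := one_sub_inv_le_log_of_pos (div_pos ha (hab ha.ne'))
  rw [inv_div] at hlog
  calc a - b = a * (1 - b / a) := by field_simp
    _ ≤ a * log (a / b) := mul_le_mul_of_nonneg_left hlog ha.le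

/-- The log-sum inequality. -/
theorem sum_mul_log_div_sum_le {ι : Type*} (s : Finset ι) (a b : ι → ℝ)
    (ha : ∀ i ∈ s, 0 ≤ a i) (hb : ∀ i ∈ s, 0 ≤ b i) (hab : ∀ i ∈ s, a i ≠ 0 → 0 < b i) :
    (∑ i ∈ s, a i) * log ((∑ i ∈ s, a i) / ∑ i ∈ s, b i) ≤ ∑ i ∈ s, a i * log (a i / b i) := by
  set A := ∑ i ∈ s, a i
  set B := ∑ i ∈ s, b i
  rcases (Finset.sum_nonneg ha).eq_or_lt with hA | hA
  · have hzero : ∀ i ∈ s, a i = 0 := (Finset.sum_eq_zero_iff_of_nonneg ha).mp hA.symm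
    have hrhs : ∑ i ∈ s, a i * log (a i / b i) = 0 :=
      Finset.sum_eq_zero fun i hi => by simp [hzero i hi]
    simp [A, ← hA, hrhs]
  obtain ⟨j, hj, haj⟩ := Finset.exists_ne_zero_of_sum_ne_zero hA.ne'
  have hB : 0 < B := Finset.sum_pos' hb ⟨j, hj, hab j hj haj⟩
  have hc : 0 < A / B := div_pos hA hB
  -- compare each `a i` with its share `b i * (A / B)` of the rescaled `b`, whose total is `A`
  have hterm : ∀ i ∈ s, a i - b i * (A / B) ≤ a i * log (a i / b i) - a i * log (A / B) := by
    intro i hi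
    rcases eq_or_ne (a i) 0 with hai | hai
    · simpa [hai] using mul_nonneg (hb i hi) hc.le
    have hbi := hab i hi hai
    have := sub_le_mul_log_div (ha i hi) (mul_nonneg (hb i hi) hc.le)
      fun _ => mul_pos hbi hc
    rwa [← div_div, log_div (div_pos (lt_of_le_of_ne (ha i hi) hai.symm) hbi).ne' hc.ne',
      mul_sub] at this
  have hsum := Finset.sum_le_sum hterm
  rw [Finset.sum_sub_distrib, Finset.sum_sub_distrib, ← Finset.sum_mul, ← Finset.sum_mul] at hsum
  change A - B * (A / B) ≤ _ - A * log (A / B) at hsum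
  rw [mul_div_cancel₀ A hB.ne', sub_self] at hsum
  linarith

end Real

lemma klTerm_ne_bot (p q : ℝ) : klTerm p q ≠ ⊥ := by
  unfold klTerm
  split_ifs
  exacts [EReal.zero_ne_bot, top_ne_bot, EReal.coe_ne_bot _]

lemma klTerm_self (x : ℝ) : klTerm x x = 0 := by
  unfold klTerm
  split_ifs with h
  · rfl
  · simp [div_self h]

lemma dkl_self (q : ℝ) : dkl q q = 0 := by
  simp [dkl, klTerm_self]

lemma klTerm_of_imp_ne_zero {p q : ℝ} (h : p ≠ 0 → q ≠ 0) :
    klTerm p q = ((p * log (p / q) : ℝ) : EReal) := by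
  unfold klTerm
  by_cases hp : p = 0
  · simp [hp]
  · simp [hp, h hp]

lemma sum_klTerm_ne_bot {ι : Type*} (s : Finset ι) (a b : ι → ℝ) :
    ∑ i ∈ s, klTerm (a i) (b i) ≠ ⊥ := by
  induction s using Finset.cons_induction with
  | empty => simp
  | cons i s _ ih =>
    rw [Finset.sum_cons]
    exact EReal.add_ne_bot_iff.mpr ⟨klTerm_ne_bot _ _, ih⟩

theorem klTerm_sum_le_sum_klTerm {ι : Type*} (s : Finset ι) (a b : ι → ℝ)
    (ha : ∀ i ∈ s, 0 ≤ a i) (hb : ∀ i ∈ s, 0 ≤ b i) :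
    klTerm (∑ i ∈ s, a i) (∑ i ∈ s, b i) ≤ ∑ i ∈ s, klTerm (a i) (b i) := by
  classical
  by_cases hinf : ∃ i ∈ s, a i ≠ 0 ∧ b i = 0
  · obtain ⟨i, hi, hai, hbi⟩ := hinf
    have htop : klTerm (a i) (b i) = ⊤ := by simp [klTerm, hai, hbi]
    have hrhs : ∑ j ∈ s, klTerm (a j) (b j) = ⊤ := by
      rw [← Finset.add_sum_erase s _ hi, htop, EReal.top_add_of_ne_bot (sum_klTerm_ne_bot _ _ _)]
    exact hrhs ▸ le_top
  push Not at hinf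
  have hab : ∀ i ∈ s, a i ≠ 0 → 0 < b i := fun i hi hai =>
    (hb i hi).lt_of_ne (hinf i hi hai).symm
  have hsum : ∑ i ∈ s, a i ≠ 0 → ∑ i ∈ s, b i ≠ 0 := fun hA => by
    obtain ⟨j, hj, haj⟩ := Finset.exists_ne_zero_of_sum_ne_zero hA
    exact (Finset.sum_pos' hb ⟨j, hj, hab j hj haj⟩).ne'
  rw [klTerm_of_imp_ne_zero hsum,
    Finset.sum_congr rfl fun i hi => klTerm_of_imp_ne_zero (hinf i hi), ← EReal.coe_finset_sum]
  exact_mod_cast Real.sum_mul_log_div_sum_le s a b ha hb hab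

section KullbackLeibler

variable {V : Type*} [Fintype V] {μ p : V → ℝ}

lemma DKL_nonneg (hμ0 : ∀ x, 0 ≤ μ x) (hp0 : ∀ x, 0 ≤ p x) (hsum : ∑ x, μ x = ∑ x, p x) :
    0 ≤ DKL μ p := by
  have h := klTerm_sum_le_sum_klTerm Finset.univ μ p (fun x _ => hμ0 x) (fun x _ => hp0 x)
  rwa [hsum, klTerm_self] at h

theorem dkl_one_sub_le_DKL (hμ0 : ∀ x, 0 ≤ μ x) (hμsum : ∑ x, μ x = 1)
    (hp0 : ∀ x, 0 ≤ p x) (hpsum : ∑ x, p x = 1) (x : V) :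
    dkl (1 - μ x) (1 - p x) ≤ DKL μ p := by
  classical
  have hrest := klTerm_sum_le_sum_klTerm (Finset.univ.erase x) μ p
    (fun y _ => hμ0 y) (fun y _ => hp0 y)
  rw [Finset.sum_erase_eq_sub (Finset.mem_univ x), Finset.sum_erase_eq_sub (Finset.mem_univ x),
    hμsum, hpsum] at hrest
  calc dkl (1 - μ x) (1 - p x) = klTerm (1 - μ x) (1 - p x) + klTerm (μ x) (p x) := by
        simp only [dkl, sub_sub_cancel]
    _ ≤ (∑ y ∈ Finset.univ.erase x, klTerm (μ y) (p y)) + klTerm (μ x) (p x) := by gcongr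
    _ = DKL μ p := Finset.sum_erase_add _ _ (Finset.mem_univ x)

end KullbackLeibler

theorem off_mode_mass_bound_general {V : Type*} [Fintype V]
    (μ p : V → ℝ)
    (hμ0 : ∀ x, 0 ≤ μ x) (hμ1 : ∀ x, μ x ≤ 1) (hμsum : ∑ x, μ x = 1)
    (hp0 : ∀ x, 0 ≤ p x) (hp1 : ∀ x, p x ≤ 1) (hpsum : ∑ x, p x = 1)
    (xstar : V) :
    (1 - μ xstar ≤
      sSup {l : ℝ | l ∈ Set.Icc (0 : ℝ) 1 ∧ dkl l (1 - p xstar) ≤ DKL μ p}) ∧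
    ((1 - p xstar) ∈
      {l : ℝ | l ∈ Set.Icc (0 : ℝ) 1 ∧ dkl l (1 - p xstar) ≤ DKL μ p}) ∧
    dkl (1 - p xstar) (1 - p xstar) = 0 := by
  have hDKL : 0 ≤ DKL μ p := DKL_nonneg hμ0 hp0 (hμsum.trans hpsum.symm)
  refine ⟨le_csSup ⟨1, fun l hl => hl.1.2⟩ ⟨⟨?_, ?_⟩, dkl_one_sub_le_DKL hμ0 hμsum hp0 hpsum _⟩,
    ⟨⟨?_, ?_⟩, (dkl_self _).trans_le hDKL⟩, dkl_self _⟩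
  all_goals linarith [hμ0 xstar, hμ1 xstar, hp0 xstar, hp1 xstar]

/-- the off-mode mass `1 - μ x*` is bounded by
`sup {λ ∈ [0,1] : d_kl(λ‖q) ≤ D_KL(μ‖p)}`, and `q := 1 - p x*` itself belongs to
this set since `d_kl(q‖q) = 0`. -/
theorem off_mode_mass_bound {V : Type*} [Fintype V] [Nonempty V]
    (μ p : V → ℝ)
    (hμ0 : ∀ x, 0 ≤ μ x) (hμ1 : ∀ x, μ x ≤ 1) (hμsum : ∑ x, μ x = 1)
    (hp0 : ∀ x, 0 ≤ p x) (hp1 : ∀ x, p x ≤ 1) (hpsum : ∑ x, p x = 1)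
    (xstar : V) (hxstar : ∀ x, p x ≤ p xstar) :
    (1 - μ xstar ≤
      sSup {l : ℝ | l ∈ Set.Icc (0 : ℝ) 1 ∧ dkl l (1 - p xstar) ≤ DKL μ p}) ∧
    ((1 - p xstar) ∈
      {l : ℝ | l ∈ Set.Icc (0 : ℝ) 1 ∧ dkl l (1 - p xstar) ≤ DKL μ p}) ∧
    dkl (1 - p xstar) (1 - p xstar) = 0 :=
  off_mode_mass_bound_general μ p hμ0 hμ1 hμsum hp0 hp1 hpsum xstar
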